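/- Let c be a unitary central element of A (c ∈ Z(A), c*c = 1 = cc*). Then ĉ(g) := (g ▷ c⁻¹)c defines an element ĉ ∈ U(H,A), and the map c ↦ ĉ is a group homomorphism from the unitary central elements U(Z(A)) to U(H,A). -/
import Mathlib


variable {C : Type*} [CommRing C] [StarRing C]
variable {H : Type*} [Ring H] [HopfAlgebra C H] [StarRing H] [StarModule C H]
variable {A : Type*} [Ring A] [StarRing A] [Algebra C A] [StarModule C A]

open TensorProduct in
/-- `SwRep g g1 g2` states that `Δ(g) = ∑ i, g1 i ⊗ g2 i`, i.e. `(g1, g2)` is a Sweedler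
representation of the comultiplication of `g`. -/
def SwRep {C : Type*} [CommRing C] {H : Type*} [Ring H] [HopfAlgebra C H]
    (g : H) {n : ℕ} (g1 g2 : Fin n → H) : Prop :=
  Coalgebra.comul (R := C) g = ∑ i, g1 i ⊗ₜ[C] g2 i

/-- `H` is a Hopf `*`-algebra: comultiplication and counit are `*`-homomorphisms. -/
def IsHopfStar (C H : Type*) [CommRing C] [StarRing C] [Ring H] [HopfAlgebra C H]
    [StarRing H] [StarModule C H] : Prop :=
  (∀ g : H, Coalgebra.counit (R := C) (star g) = star (Coalgebra.counit (R := C) g)) ∧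
  (∀ (g : H) (n : ℕ) (g1 g2 : Fin n → H), SwRep (C := C) g g1 g2 →
      SwRep (C := C) (star g) (fun i => star (g1 i)) (fun i => star (g2 i)))

/-- A left `*`-action of the Hopf `*`-algebra `H` on the `*`-algebra `A`:
`g ▷ (ab) = (g₍₁₎ ▷ a)(g₍₂₎ ▷ b)`, `g ▷ 1 = ε(g)1`, `(g ▷ a)* = S(g)* ▷ a*`. -/
structure StarAction (C H A : Type*) [CommRing C] [StarRing C] [Ring H] [HopfAlgebra C H]
    [StarRing H] [StarModule C H] [Ring A] [StarRing A] [Algebra C A] [StarModule C A] where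
  act : H →ₗ[C] A →ₗ[C] A
  act_one : ∀ a : A, act 1 a = a
  act_mul : ∀ (g h : H) (a : A), act (g * h) a = act g (act h a)
  act_ab : ∀ (g : H) (a b : A) (n : ℕ) (g1 g2 : Fin n → H), SwRep (C := C) g g1 g2 →
      act g (a * b) = ∑ i, act (g1 i) a * act (g2 i) b
  act_unit : ∀ g : H, act g 1 = Coalgebra.counit (R := C) g • (1 : A)
  act_star : ∀ (g : H) (a : A), star (act g a) =
      act (star (HopfAlgebra.antipode (R := C) g)) (star a)

/-- The convolution product on `Hom_C(H,A)`: `(f * h)(g) = f(g₍₁₎)h(g₍₂₎)`. -/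
noncomputable def conv (f h : H →ₗ[C] A) : H →ₗ[C] A :=
  (TensorProduct.lift ((LinearMap.mul C A).compl₁₂ f h)).comp (Coalgebra.comul)

/-- The convolution unit `ê(g) = ε(g)1_A`. -/
noncomputable def convUnit : H →ₗ[C] A := (Algebra.linearMap C A).comp (Coalgebra.counit)

/-- The set `GL(H,A)` of cocycles: `â(1)=1`, `â(gh) = â(g₍₁₎)(g₍₂₎ ▷ â(h))`, and
`(g₍₁₎ ▷ b)â(g₍₂₎) = â(g₍₁₎)(g₍₂₎ ▷ b)`. -/
def GLset (α : StarAction C H A) : Set (H →ₗ[C] A) :=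
  {f | f 1 = 1 ∧
    (∀ (g h : H) (n : ℕ) (g1 g2 : Fin n → H), SwRep (C := C) g g1 g2 →
        f (g * h) = ∑ i, f (g1 i) * α.act (g2 i) (f h)) ∧
    (∀ (g : H) (b : A) (n : ℕ) (g1 g2 : Fin n → H), SwRep (C := C) g g1 g2 →
        ∑ i, α.act (g1 i) b * f (g2 i) = ∑ i, f (g1 i) * α.act (g2 i) b)}

/-- The subset `U(H,A) ⊆ GL(H,A)` of unitary cocycles:
`â(g₍₁₎)(â(S(g₍₂₎)*))* = ε(g)1`. -/
def Uset (α : StarAction C H A) : Set (H →ₗ[C] A) :=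
  {f | f ∈ GLset α ∧
    ∀ (g : H) (n : ℕ) (g1 g2 : Fin n → H), SwRep (C := C) g g1 g2 →
      ∑ i, f (g1 i) * star (f (star (HopfAlgebra.antipode (R := C) (g2 i)))) =
        Coalgebra.counit (R := C) g • (1 : A)}

/-- A unitary central element of `A`. -/
def IsUnitaryCentral (c : A) : Prop :=
  (∀ a : A, a * c = c * a) ∧ star c * c = 1 ∧ c * star c = 1

/-- `ĉ(g) = (g ▷ c⁻¹)c = (g ▷ c*)c` for a unitary central `c`. -/
noncomputable def hatc (α : StarAction C H A) (c : A) : H →ₗ[C] A :=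
  (LinearMap.mulRight C c).comp (α.act.flip (star c))

section ConvAux

open TensorProduct

variable {C : Type*} [CommRing C] {H : Type*} [Ring H] [HopfAlgebra C H]
variable {B : Type*} [Ring B] [Algebra C B]

lemma exists_swRep (g : H) : ∃ (n : ℕ) (g1 g2 : Fin n → H), SwRep (C := C) g g1 g2 := by
  classical
  obtain ⟨S, hS⟩ := TensorProduct.exists_finset (R := C) (Coalgebra.comul g)
  refine ⟨Fintype.card S, fun i => (((Fintype.equivFin S).symm i : S) : H × H).1,
    fun i => (((Fintype.equivFin S).symm i : S) : H × H).2, ?_⟩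
  unfold SwRep
  rw [hS, ← Finset.sum_coe_sort S (fun p : H × H => p.1 ⊗ₜ[C] p.2),
    ← Equiv.sum_comp (Fintype.equivFin S).symm
      (fun p : S => (p : H × H).1 ⊗ₜ[C] (p : H × H).2)]

lemma swRep_apply {g : H} {n : ℕ} {g1 g2 : Fin n → H} (hrep : SwRep (C := C) g g1 g2)
    {X : Type*} [AddCommMonoid X] [Module C X] (F : H ⊗[C] H →ₗ[C] X) :
    F (Coalgebra.comul (R := C) g) = ∑ i, F (g1 i ⊗ₜ[C] g2 i) := by
  rw [hrep, map_sum]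

/-- convolution product, for a general target algebra. -/
noncomputable def cv (f h : H →ₗ[C] B) : H →ₗ[C] B :=
  (LinearMap.mul' C B) ∘ₗ (TensorProduct.map f h) ∘ₗ (Coalgebra.comul (R := C))

/-- convolution unit. -/
noncomputable def cu : H →ₗ[C] B := (Algebra.linearMap C B) ∘ₗ (Coalgebra.counit (R := C))

lemma cv_apply {g : H} {n : ℕ} {g1 g2 : Fin n → H} (hrep : SwRep (C := C) g g1 g2)
    (f h : H →ₗ[C] B) : cv f h g = ∑ i, f (g1 i) * h (g2 i) := by
  simp only [cv, LinearMap.comp_apply]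
  rw [swRep_apply hrep]
  simp [LinearMap.mul'_apply]

lemma cu_apply (g : H) : (cu : H →ₗ[C] B) g = Coalgebra.counit (R := C) g • (1 : B) := by
  simp [cu, Algebra.algebraMap_eq_smul_one]

lemma sum_counit_smul_left {g : H} {n : ℕ} {g1 g2 : Fin n → H}
    (hrep : SwRep (C := C) g g1 g2) :
    ∑ i, Coalgebra.counit (R := C) (g2 i) • g1 i = g := by
  have h := swRep_apply hrep
    ((TensorProduct.rid C H).toLinearMap ∘ₗ (Coalgebra.counit (R := C)).lTensor H)
  simp only [LinearMap.comp_apply, LinearMap.lTensor_tmul, LinearEquiv.coe_coe,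
    TensorProduct.rid_tmul] at h
  rw [Coalgebra.lTensor_counit_comul] at h
  simpa using h.symm

lemma sum_counit_smul_right {g : H} {n : ℕ} {g1 g2 : Fin n → H}
    (hrep : SwRep (C := C) g g1 g2) :
    ∑ i, Coalgebra.counit (R := C) (g1 i) • g2 i = g := by
  have h := swRep_apply hrep
    ((TensorProduct.lid C H).toLinearMap ∘ₗ (Coalgebra.counit (R := C)).rTensor H)
  simp only [LinearMap.comp_apply, LinearMap.rTensor_tmul, LinearEquiv.coe_coe,
    TensorProduct.lid_tmul] at h
  rw [Coalgebra.rTensor_counit_comul] at h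
  simpa using h.symm

lemma swSum_antipode_mul {g : H} {n : ℕ} {g1 g2 : Fin n → H}
    (hrep : SwRep (C := C) g g1 g2) :
    ∑ i, HopfAlgebra.antipode (R := C) (g1 i) * g2 i
      = Coalgebra.counit (R := C) g • (1 : H) := by
  have h := swRep_apply hrep
    ((LinearMap.mul' C H) ∘ₗ (HopfAlgebra.antipode (R := C)).rTensor H)
  simp only [LinearMap.comp_apply, LinearMap.rTensor_tmul, LinearMap.mul'_apply] at h
  rw [HopfAlgebra.mul_antipode_rTensor_comul_apply] at h
  rw [Algebra.algebraMap_eq_smul_one] at h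
  exact h.symm

lemma swSum_mul_antipode {g : H} {n : ℕ} {g1 g2 : Fin n → H}
    (hrep : SwRep (C := C) g g1 g2) :
    ∑ i, g1 i * HopfAlgebra.antipode (R := C) (g2 i)
      = Coalgebra.counit (R := C) g • (1 : H) := by
  have h := swRep_apply hrep
    ((LinearMap.mul' C H) ∘ₗ (HopfAlgebra.antipode (R := C)).lTensor H)
  simp only [LinearMap.comp_apply, LinearMap.lTensor_tmul, LinearMap.mul'_apply] at h
  rw [HopfAlgebra.mul_antipode_lTensor_comul_apply] at h
  rw [Algebra.algebraMap_eq_smul_one] at h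
  exact h.symm

lemma cv_cu_left (f : H →ₗ[C] B) : cv cu f = f := by
  apply LinearMap.ext; intro g
  obtain ⟨n, g1, g2, hrep⟩ := exists_swRep (C := C) g
  rw [cv_apply hrep]
  calc ∑ i, (cu : H →ₗ[C] B) (g1 i) * f (g2 i)
      = ∑ i, f (Coalgebra.counit (R := C) (g1 i) • g2 i) := by
        refine Finset.sum_congr rfl fun i _ => ?_
        rw [cu_apply, map_smul, smul_mul_assoc, one_mul]
    _ = f g := by rw [← map_sum, sum_counit_smul_right hrep]

lemma cv_cu_right (f : H →ₗ[C] B) : cv f cu = f := by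
  apply LinearMap.ext; intro g
  obtain ⟨n, g1, g2, hrep⟩ := exists_swRep (C := C) g
  rw [cv_apply hrep]
  calc ∑ i, f (g1 i) * (cu : H →ₗ[C] B) (g2 i)
      = ∑ i, f (Coalgebra.counit (R := C) (g2 i) • g1 i) := by
        refine Finset.sum_congr rfl fun i _ => ?_
        rw [cu_apply, map_smul, mul_smul_comm, mul_one]
    _ = f g := by rw [← map_sum, sum_counit_smul_left hrep]

lemma cv_assoc (f g' h : H →ₗ[C] B) : cv (cv f g') h = cv f (cv g' h) := by
  apply LinearMap.ext; intro x
  obtain ⟨n, x1, x2, hrep⟩ := exists_swRep (C := C) x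
  choose m p1 p2 hp using fun i : Fin n => exists_swRep (C := C) (x1 i)
  choose l q1 q2 hq using fun i : Fin n => exists_swRep (C := C) (x2 i)
  set Ξ : H ⊗[C] (H ⊗[C] H) →ₗ[C] B :=
    (LinearMap.mul' C B) ∘ₗ
      TensorProduct.map f ((LinearMap.mul' C B) ∘ₗ TensorProduct.map g' h) with hΞdef
  have hΞ : ∀ a b c : H, Ξ (a ⊗ₜ[C] (b ⊗ₜ[C] c)) = f a * (g' b * h c) := by
    intro a b c
    simp [hΞdef, LinearMap.mul'_apply]
  have h1 : (TensorProduct.assoc C H H H)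
      ((Coalgebra.comul (R := C)).rTensor H (Coalgebra.comul (R := C) x))
      = ∑ i, ∑ j, p1 i j ⊗ₜ[C] (p2 i j ⊗ₜ[C] x2 i) := by
    rw [hrep, map_sum, map_sum]
    refine Finset.sum_congr rfl fun i _ => ?_
    rw [LinearMap.rTensor_tmul, hp i, TensorProduct.sum_tmul, map_sum]
    exact Finset.sum_congr rfl fun j _ => TensorProduct.assoc_tmul _ _ _
  have h2 : (Coalgebra.comul (R := C)).lTensor H (Coalgebra.comul (R := C) x)
      = ∑ i, ∑ j, x1 i ⊗ₜ[C] (q1 i j ⊗ₜ[C] q2 i j) := by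
    rw [hrep, map_sum]
    refine Finset.sum_congr rfl fun i _ => ?_
    rw [LinearMap.lTensor_tmul, hq i, TensorProduct.tmul_sum]
  have key : ∑ i, ∑ j, Ξ (p1 i j ⊗ₜ[C] (p2 i j ⊗ₜ[C] x2 i))
      = ∑ i, ∑ j, Ξ (x1 i ⊗ₜ[C] (q1 i j ⊗ₜ[C] q2 i j)) := by
    calc ∑ i, ∑ j, Ξ (p1 i j ⊗ₜ[C] (p2 i j ⊗ₜ[C] x2 i))
        = Ξ ((TensorProduct.assoc C H H H)
            ((Coalgebra.comul (R := C)).rTensor H (Coalgebra.comul (R := C) x))) := by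
          rw [h1]; simp only [map_sum]
      _ = Ξ ((Coalgebra.comul (R := C)).lTensor H (Coalgebra.comul (R := C) x)) := by
          rw [Coalgebra.coassoc_apply]
      _ = ∑ i, ∑ j, Ξ (x1 i ⊗ₜ[C] (q1 i j ⊗ₜ[C] q2 i j)) := by
          rw [h2]; simp only [map_sum]
  calc cv (cv f g') h x
      = ∑ i, (∑ j, f (p1 i j) * g' (p2 i j)) * h (x2 i) := by
        rw [cv_apply hrep]
        exact Finset.sum_congr rfl fun i _ => by rw [cv_apply (hp i)]
    _ = ∑ i, ∑ j, Ξ (p1 i j ⊗ₜ[C] (p2 i j ⊗ₜ[C] x2 i)) := by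
        refine Finset.sum_congr rfl fun i _ => ?_
        rw [Finset.sum_mul]
        exact Finset.sum_congr rfl fun j _ => by rw [hΞ, mul_assoc]
    _ = ∑ i, ∑ j, Ξ (x1 i ⊗ₜ[C] (q1 i j ⊗ₜ[C] q2 i j)) := key
    _ = ∑ i, f (x1 i) * (∑ j, g' (q1 i j) * h (q2 i j)) := by
        refine Finset.sum_congr rfl fun i _ => ?_
        rw [Finset.mul_sum]
        exact Finset.sum_congr rfl fun j _ => by rw [hΞ]
    _ = cv f (cv g' h) x := by
        rw [cv_apply hrep]
        exact (Finset.sum_congr rfl fun i _ => by rw [cv_apply (hq i)]).symm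

lemma cv_inv_unique {a f b : H →ₗ[C] B} (h1 : cv a f = cu) (h2 : cv f b = cu) : a = b := by
  have h3 : cv (cv a f) b = cv a (cv f b) := cv_assoc a f b
  rw [h1, h2, cv_cu_left, cv_cu_right] at h3
  exact h3.symm

end ConvAux

section HopfAux

open TensorProduct

variable {C : Type*} [CommRing C] {H : Type*} [Ring H] [HopfAlgebra C H]

lemma counit_antipode' (g : H) :
    Coalgebra.counit (R := C) (HopfAlgebra.antipode (R := C) g)
      = Coalgebra.counit (R := C) g := by
  obtain ⟨n, g1, g2, hrep⟩ := exists_swRep (C := C) g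
  have h1 : g = ∑ i, Coalgebra.counit (R := C) (g2 i) • g1 i :=
    (sum_counit_smul_left hrep).symm
  calc Coalgebra.counit (R := C) (HopfAlgebra.antipode (R := C) g)
      = ∑ i, Coalgebra.counit (R := C)
          (HopfAlgebra.antipode (R := C) (g1 i)) * Coalgebra.counit (R := C) (g2 i) := by
        conv_lhs => rw [h1]
        rw [map_sum, map_sum]
        refine Finset.sum_congr rfl fun i _ => ?_
        rw [map_smul, map_smul, smul_eq_mul, mul_comm]
    _ = Coalgebra.counit (R := C) (∑ i, HopfAlgebra.antipode (R := C) (g1 i) * g2 i) := by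
        rw [map_sum]
        exact (Finset.sum_congr rfl fun i _ => by rw [Bialgebra.counit_mul]).symm
    _ = Coalgebra.counit (R := C) g := by
        rw [swSum_antipode_mul hrep, map_smul, Bialgebra.counit_one, smul_eq_mul, mul_one]

/-- the key structure-map identity used in `hopf_I`. -/
lemma hopf_E1 :
    (LinearMap.mul' C (H ⊗[C] H)) ∘ₗ
        ((((TensorProduct.mk C H H).flip 1) ∘ₗ (HopfAlgebra.antipode (R := C))).rTensor
          (H ⊗[C] H)) ∘ₗ
        (TensorProduct.assoc C H H H).toLinearMap
      = ((LinearMap.mul' C H) ∘ₗ (HopfAlgebra.antipode (R := C)).rTensor H).rTensor H := by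
  apply TensorProduct.ext_threefold
  intro x y z
  simp only [LinearMap.comp_apply, LinearEquiv.coe_coe, TensorProduct.assoc_tmul,
    LinearMap.rTensor_tmul, LinearMap.flip_apply, TensorProduct.mk_apply,
    LinearMap.mul'_apply, Algebra.TensorProduct.tmul_mul_tmul, one_mul]

/-- `∑ S(x₍₁₎) x₍₂₎' ⊗ x₍₂₎'' = 1 ⊗ x`. -/
lemma hopf_I {x : H} {n : ℕ} {x1 x2 : Fin n → H} (hrep : SwRep (C := C) x x1 x2) :
    ∑ j, ((HopfAlgebra.antipode (R := C) (x1 j) ⊗ₜ[C] (1 : H))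
        * Coalgebra.comul (R := C) (x2 j))
      = (1 : H) ⊗ₜ[C] x := by
  set ι₁ : H →ₗ[C] H ⊗[C] H := (TensorProduct.mk C H H).flip 1 with hι
  set Φ : H ⊗[C] H →ₗ[C] H ⊗[C] H :=
    (LinearMap.mul' C (H ⊗[C] H)) ∘ₗ
      TensorProduct.map (ι₁ ∘ₗ (HopfAlgebra.antipode (R := C))) (Coalgebra.comul (R := C))
    with hΦdef
  have hΦ : ∀ a b : H, Φ (a ⊗ₜ[C] b)
      = (HopfAlgebra.antipode (R := C) a ⊗ₜ[C] (1 : H)) * Coalgebra.comul (R := C) b := by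
    intro a b
    simp [hΦdef, hι, LinearMap.mul'_apply]
  have hsplit : TensorProduct.map (ι₁ ∘ₗ (HopfAlgebra.antipode (R := C)))
      (Coalgebra.comul (R := C) (A := H))
      = ((ι₁ ∘ₗ (HopfAlgebra.antipode (R := C))).rTensor (H ⊗[C] H)) ∘ₗ
        ((Coalgebra.comul (R := C) (A := H)).lTensor H) := by
    rw [LinearMap.rTensor, LinearMap.lTensor, ← TensorProduct.map_comp,
      LinearMap.comp_id, LinearMap.id_comp]
  calc ∑ j, ((HopfAlgebra.antipode (R := C) (x1 j) ⊗ₜ[C] (1 : H))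
        * Coalgebra.comul (R := C) (x2 j))
      = Φ (Coalgebra.comul (R := C) x) := by
        rw [swRep_apply hrep Φ]
        exact Finset.sum_congr rfl fun j _ => (hΦ _ _).symm
    _ = (LinearMap.mul' C (H ⊗[C] H))
          (((ι₁ ∘ₗ (HopfAlgebra.antipode (R := C))).rTensor (H ⊗[C] H))
            (((Coalgebra.comul (R := C)).lTensor H)
              (Coalgebra.comul (R := C) x))) := by
        rw [hΦdef, hsplit]; simp only [LinearMap.comp_apply]
    _ = (LinearMap.mul' C (H ⊗[C] H))
          (((ι₁ ∘ₗ (HopfAlgebra.antipode (R := C))).rTensor (H ⊗[C] H))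
            ((TensorProduct.assoc C H H H)
              (((Coalgebra.comul (R := C)).rTensor H)
                (Coalgebra.comul (R := C) x)))) := by
        rw [Coalgebra.coassoc_apply]
    _ = (((LinearMap.mul' C H) ∘ₗ (HopfAlgebra.antipode (R := C)).rTensor H).rTensor H)
          (((Coalgebra.comul (R := C)).rTensor H) (Coalgebra.comul (R := C) x)) := by
        have := LinearMap.congr_fun (hopf_E1 (C := C) (H := H))
          (((Coalgebra.comul (R := C)).rTensor H) (Coalgebra.comul (R := C) x))
        simpa [hι] using this
    _ = ∑ i, (Coalgebra.counit (R := C) (x1 i) • (1 : H)) ⊗ₜ[C] x2 i := by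
        rw [hrep, map_sum, map_sum]
        refine Finset.sum_congr rfl fun i _ => ?_
        rw [LinearMap.rTensor_tmul, LinearMap.rTensor_tmul, LinearMap.comp_apply]
        rw [HopfAlgebra.mul_antipode_rTensor_comul_apply, Algebra.algebraMap_eq_smul_one]
    _ = (1 : H) ⊗ₜ[C] x := by
        rw [← sum_counit_smul_right hrep, TensorProduct.tmul_sum]
        exact Finset.sum_congr rfl fun i _ => by rw [TensorProduct.smul_tmul]

lemma cv_comul_comulS :
    cv (Coalgebra.comul (R := C))
        ((Coalgebra.comul (R := C)) ∘ₗ (HopfAlgebra.antipode (R := C)))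
      = (cu : H →ₗ[C] H ⊗[C] H) := by
  apply LinearMap.ext; intro g
  obtain ⟨n, g1, g2, hrep⟩ := exists_swRep (C := C) g
  rw [cv_apply hrep, cu_apply]
  calc ∑ i, Coalgebra.comul (R := C) (g1 i) *
        ((Coalgebra.comul (R := C)) ∘ₗ (HopfAlgebra.antipode (R := C))) (g2 i)
      = Coalgebra.comul (R := C)
          (∑ i, g1 i * HopfAlgebra.antipode (R := C) (g2 i)) := by
        rw [map_sum]
        exact Finset.sum_congr rfl fun i _ => by
          rw [LinearMap.comp_apply, Bialgebra.comul_mul]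
    _ = Coalgebra.counit (R := C) g • (1 : H ⊗[C] H) := by
        rw [swSum_mul_antipode hrep, map_smul, Bialgebra.comul_one,
          Algebra.TensorProduct.one_def]

lemma cv_G_comul :
    cv ((TensorProduct.comm C H H).toLinearMap ∘ₗ
          TensorProduct.map (HopfAlgebra.antipode (R := C)) (HopfAlgebra.antipode (R := C))
          ∘ₗ (Coalgebra.comul (R := C)))
        (Coalgebra.comul (R := C))
      = (cu : H →ₗ[C] H ⊗[C] H) := by
  apply LinearMap.ext; intro g
  obtain ⟨n, g1, g2, hrep⟩ := exists_swRep (C := C) g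
  choose m p1 p2 hp using fun i : Fin n => exists_swRep (C := C) (g1 i)
  choose l q1 q2 hq using fun i : Fin n => exists_swRep (C := C) (g2 i)
  set Ξ : H ⊗[C] (H ⊗[C] H) →ₗ[C] H ⊗[C] H :=
    (LinearMap.mul' C (H ⊗[C] H)) ∘ₗ
      TensorProduct.map
        ((TensorProduct.comm C H H).toLinearMap ∘ₗ
          TensorProduct.map (HopfAlgebra.antipode (R := C)) (HopfAlgebra.antipode (R := C)))
        (Coalgebra.comul (R := C)) ∘ₗ
      (TensorProduct.assoc C H H H).symm.toLinearMap with hΞdef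
  have hΞ : ∀ a b c : H, Ξ (a ⊗ₜ[C] (b ⊗ₜ[C] c))
      = (HopfAlgebra.antipode (R := C) b ⊗ₜ[C] HopfAlgebra.antipode (R := C) a)
        * Coalgebra.comul (R := C) c := by
    intro a b c
    simp [hΞdef, TensorProduct.assoc_symm_tmul, TensorProduct.comm_tmul,
      LinearMap.mul'_apply]
  rw [cv_apply hrep, cu_apply]
  have h1 : (TensorProduct.assoc C H H H)
      ((Coalgebra.comul (R := C)).rTensor H (Coalgebra.comul (R := C) g))
      = ∑ i, ∑ j, p1 i j ⊗ₜ[C] (p2 i j ⊗ₜ[C] g2 i) := by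
    rw [hrep, map_sum, map_sum]
    refine Finset.sum_congr rfl fun i _ => ?_
    rw [LinearMap.rTensor_tmul, hp i, TensorProduct.sum_tmul, map_sum]
    exact Finset.sum_congr rfl fun j _ => TensorProduct.assoc_tmul _ _ _
  have h2 : (Coalgebra.comul (R := C)).lTensor H (Coalgebra.comul (R := C) g)
      = ∑ i, ∑ j, g1 i ⊗ₜ[C] (q1 i j ⊗ₜ[C] q2 i j) := by
    rw [hrep, map_sum]
    refine Finset.sum_congr rfl fun i _ => ?_
    rw [LinearMap.lTensor_tmul, hq i, TensorProduct.tmul_sum]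
  calc ∑ i, ((TensorProduct.comm C H H).toLinearMap ∘ₗ
          TensorProduct.map (HopfAlgebra.antipode (R := C)) (HopfAlgebra.antipode (R := C))
          ∘ₗ (Coalgebra.comul (R := C))) (g1 i) * Coalgebra.comul (R := C) (g2 i)
      = ∑ i, ∑ j, Ξ (p1 i j ⊗ₜ[C] (p2 i j ⊗ₜ[C] g2 i)) := by
        refine Finset.sum_congr rfl fun i _ => ?_
        have hstep : ((TensorProduct.comm C H H).toLinearMap ∘ₗ
            TensorProduct.map (HopfAlgebra.antipode (R := C))
              (HopfAlgebra.antipode (R := C)) ∘ₗ (Coalgebra.comul (R := C))) (g1 i)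
            = ∑ j, HopfAlgebra.antipode (R := C) (p2 i j)
                ⊗ₜ[C] HopfAlgebra.antipode (R := C) (p1 i j) := by
          simp only [LinearMap.comp_apply]
          rw [hp i, map_sum, map_sum]
          simp [TensorProduct.comm_tmul]
        rw [hstep, Finset.sum_mul]
        exact Finset.sum_congr rfl fun j _ => (hΞ _ _ _).symm
    _ = ∑ i, ∑ j, Ξ (g1 i ⊗ₜ[C] (q1 i j ⊗ₜ[C] q2 i j)) := by
        calc ∑ i, ∑ j, Ξ (p1 i j ⊗ₜ[C] (p2 i j ⊗ₜ[C] g2 i))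
            = Ξ ((TensorProduct.assoc C H H H)
                ((Coalgebra.comul (R := C)).rTensor H (Coalgebra.comul (R := C) g))) := by
              rw [h1]; simp only [map_sum]
          _ = Ξ ((Coalgebra.comul (R := C)).lTensor H (Coalgebra.comul (R := C) g)) := by
              rw [Coalgebra.coassoc_apply]
          _ = ∑ i, ∑ j, Ξ (g1 i ⊗ₜ[C] (q1 i j ⊗ₜ[C] q2 i j)) := by
              rw [h2]; simp only [map_sum]
    _ = ∑ i, ((1 : H) ⊗ₜ[C] HopfAlgebra.antipode (R := C) (g1 i))
          * ((1 : H) ⊗ₜ[C] g2 i) := by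
        refine Finset.sum_congr rfl fun i _ => ?_
        calc ∑ j, Ξ (g1 i ⊗ₜ[C] (q1 i j ⊗ₜ[C] q2 i j))
            = ∑ j, ((1 : H) ⊗ₜ[C] HopfAlgebra.antipode (R := C) (g1 i)) *
                ((HopfAlgebra.antipode (R := C) (q1 i j) ⊗ₜ[C] (1 : H))
                  * Coalgebra.comul (R := C) (q2 i j)) := by
              refine Finset.sum_congr rfl fun j _ => ?_
              rw [hΞ]
              have : (HopfAlgebra.antipode (R := C) (q1 i j)
                  ⊗ₜ[C] HopfAlgebra.antipode (R := C) (g1 i) : H ⊗[C] H)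
                  = ((1 : H) ⊗ₜ[C] HopfAlgebra.antipode (R := C) (g1 i))
                    * (HopfAlgebra.antipode (R := C) (q1 i j) ⊗ₜ[C] (1 : H)) := by
                rw [Algebra.TensorProduct.tmul_mul_tmul, one_mul, mul_one]
              rw [this, mul_assoc]
          _ = ((1 : H) ⊗ₜ[C] HopfAlgebra.antipode (R := C) (g1 i)) *
                (∑ j, (HopfAlgebra.antipode (R := C) (q1 i j) ⊗ₜ[C] (1 : H))
                  * Coalgebra.comul (R := C) (q2 i j)) := by
              rw [Finset.mul_sum]
          _ = ((1 : H) ⊗ₜ[C] HopfAlgebra.antipode (R := C) (g1 i))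
                * ((1 : H) ⊗ₜ[C] g2 i) := by rw [hopf_I (hq i)]
    _ = Coalgebra.counit (R := C) g • (1 : H ⊗[C] H) := by
        have : ∑ i, ((1 : H) ⊗ₜ[C] HopfAlgebra.antipode (R := C) (g1 i))
            * ((1 : H) ⊗ₜ[C] g2 i)
            = (1 : H) ⊗ₜ[C] (∑ i, HopfAlgebra.antipode (R := C) (g1 i) * g2 i) := by
          rw [TensorProduct.tmul_sum]
          exact Finset.sum_congr rfl fun i _ => by
            rw [Algebra.TensorProduct.tmul_mul_tmul, one_mul]
        rw [this, swSum_antipode_mul hrep, Algebra.TensorProduct.one_def]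
        rw [TensorProduct.tmul_smul]

lemma comul_antipode :
    (Coalgebra.comul (R := C)) ∘ₗ (HopfAlgebra.antipode (R := C) (A := H))
      = (TensorProduct.comm C H H).toLinearMap ∘ₗ
          TensorProduct.map (HopfAlgebra.antipode (R := C)) (HopfAlgebra.antipode (R := C))
          ∘ₗ (Coalgebra.comul (R := C)) :=
  (cv_inv_unique cv_G_comul cv_comul_comulS).symm

lemma swRep_antipode {g : H} {n : ℕ} {g1 g2 : Fin n → H} (hrep : SwRep (C := C) g g1 g2) :
    SwRep (C := C) (HopfAlgebra.antipode (R := C) g)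
      (fun i => HopfAlgebra.antipode (R := C) (g2 i))
      (fun i => HopfAlgebra.antipode (R := C) (g1 i)) := by
  unfold SwRep
  have h := LinearMap.congr_fun (comul_antipode (C := C) (H := H)) g
  simp only [LinearMap.comp_apply] at h
  rw [h, hrep, map_sum, map_sum]
  simp [TensorProduct.comm_tmul]

lemma cv_antipode_id :
    cv (HopfAlgebra.antipode (R := C) (A := H)) LinearMap.id = (cu : H →ₗ[C] H) := by
  apply LinearMap.ext; intro g
  obtain ⟨n, g1, g2, hrep⟩ := exists_swRep (C := C) g
  rw [cv_apply hrep, cu_apply]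
  simpa using swSum_antipode_mul hrep

end HopfAux

section StarAux

open TensorProduct

variable {C : Type*} [CommRing C] [StarRing C]
variable {H : Type*} [Ring H] [HopfAlgebra C H] [StarRing H] [StarModule C H]

/-- the map `g ↦ ((S ∘ ∗)²) g = (S(S(g)∗))∗`, as a linear map. -/
noncomputable def TSmap : H →ₗ[C] H where
  toFun g := star (HopfAlgebra.antipode (R := C) (star (HopfAlgebra.antipode (R := C) g)))
  map_add' x y := by simp [star_add]
  map_smul' r x := by simp [star_smul, star_star]

lemma sum_T_mul (hH : IsHopfStar C H) {g : H} {n : ℕ} {g1 g2 : Fin n → H}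
    (hrep : SwRep (C := C) g g1 g2) :
    ∑ i, star (HopfAlgebra.antipode (R := C) (star (g2 i))) * g1 i
      = Coalgebra.counit (R := C) g • (1 : H) := by
  have hrep' := hH.2 g n g1 g2 hrep
  have h4 := swSum_mul_antipode hrep'
  have h5 := congrArg star h4
  rw [star_sum] at h5
  calc ∑ i, star (HopfAlgebra.antipode (R := C) (star (g2 i))) * g1 i
      = ∑ i, star (star (g1 i) * HopfAlgebra.antipode (R := C) (star (g2 i))) := by
        refine Finset.sum_congr rfl fun i _ => ?_
        rw [star_mul, star_star]
    _ = star (Coalgebra.counit (R := C) (star g) • (1 : H)) := h5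
    _ = Coalgebra.counit (R := C) g • (1 : H) := by
        rw [hH.1 g, star_smul, star_star, star_one]

lemma cv_TS_antipode (hH : IsHopfStar C H) :
    cv (TSmap : H →ₗ[C] H) (HopfAlgebra.antipode (R := C)) = (cu : H →ₗ[C] H) := by
  apply LinearMap.ext; intro g
  obtain ⟨n, g1, g2, hrep⟩ := exists_swRep (C := C) g
  rw [cv_apply hrep, cu_apply]
  have h := sum_T_mul hH (swRep_antipode hrep)
  rw [counit_antipode'] at h
  exact h

lemma star_antipode_star_antipode (hH : IsHopfStar C H) (g : H) :
    star (HopfAlgebra.antipode (R := C) (star (HopfAlgebra.antipode (R := C) g))) = g := by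
  have h : (TSmap : H →ₗ[C] H) = LinearMap.id :=
    cv_inv_unique (cv_TS_antipode hH) cv_antipode_id
  exact LinearMap.congr_fun h g

end StarAux

section MainAux

open TensorProduct

lemma hatc_apply (α : StarAction C H A) (c : A) (g : H) :
    hatc α c g = α.act g (star c) * c := rfl

lemma conv_apply' {g : H} {n : ℕ} {g1 g2 : Fin n → H} (hrep : SwRep (C := C) g g1 g2)
    (f h : H →ₗ[C] A) : conv f h g = ∑ i, f (g1 i) * h (g2 i) := by
  simp only [conv, LinearMap.comp_apply]
  rw [swRep_apply hrep]
  simp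

end MainAux

/-- For a unitary central element `c` of `A`, `ĉ(g) = (g ▷ c⁻¹)c` lies in `U(H,A)`, and
`c ↦ ĉ` is a group homomorphism from `U(Z(A))` to the convolution group `U(H,A)`. -/
theorem hatc_hom (hH : IsHopfStar C H) (α : StarAction C H A) :
    (∀ c : A, IsUnitaryCentral c → hatc α c ∈ Uset α) ∧
    (∀ c c' : A, IsUnitaryCentral c → IsUnitaryCentral c' →
        hatc α (c * c') = conv (hatc α c) (hatc α c')) := by
  have hstarcomm : ∀ c : A, IsUnitaryCentral c → ∀ a : A, a * star c = star c * a := by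
    intro c hc a
    calc a * star c = star (c * star a) := by rw [star_mul, star_star]
      _ = star (star a * c) := by rw [hc.1 (star a)]
      _ = star c * a := by rw [star_mul, star_star]
  constructor
  · intro c hc
    have hcomm := hc.1
    have hsc := hstarcomm c hc
    refine ⟨⟨?_, ?_, ?_⟩, ?_⟩
    · -- normalization
      rw [hatc_apply, α.act_one, hc.2.1]
    · -- cocycle identity
      intro g h n g1 g2 hrep
      have hb : star c * hatc α c h = α.act h (star c) := by
        rw [hatc_apply, ← mul_assoc, ← hsc (α.act h (star c)), mul_assoc, hc.2.1, mul_one]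
      calc hatc α c (g * h) = α.act g (α.act h (star c)) * c := by
            rw [hatc_apply, α.act_mul]
        _ = α.act g (star c * hatc α c h) * c := by rw [hb]
        _ = (∑ i, α.act (g1 i) (star c) * α.act (g2 i) (hatc α c h)) * c := by
            rw [α.act_ab g (star c) (hatc α c h) n g1 g2 hrep]
        _ = ∑ i, hatc α c (g1 i) * α.act (g2 i) (hatc α c h) := by
            rw [Finset.sum_mul]
            refine Finset.sum_congr rfl fun i _ => ?_
            rw [hatc_apply α c (g1 i), mul_assoc, mul_assoc,
              ← hcomm (α.act (g2 i) (hatc α c h))]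
    · -- commutation relation
      intro g b n g1 g2 hrep
      calc ∑ i, α.act (g1 i) b * hatc α c (g2 i)
          = (∑ i, α.act (g1 i) b * α.act (g2 i) (star c)) * c := by
            rw [Finset.sum_mul]
            exact Finset.sum_congr rfl fun i _ => by rw [hatc_apply, mul_assoc]
        _ = α.act g (b * star c) * c := by
            rw [← α.act_ab g b (star c) n g1 g2 hrep]
        _ = α.act g (star c * b) * c := by rw [hsc b]
        _ = (∑ i, α.act (g1 i) (star c) * α.act (g2 i) b) * c := by
            rw [α.act_ab g (star c) b n g1 g2 hrep]
        _ = ∑ i, hatc α c (g1 i) * α.act (g2 i) b := by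
            rw [Finset.sum_mul]
            refine Finset.sum_congr rfl fun i _ => ?_
            rw [hatc_apply, mul_assoc, mul_assoc, ← hcomm (α.act (g2 i) b)]
    · -- unitarity
      intro g n g1 g2 hrep
      have hterm : ∀ x : H,
          star (hatc α c (star (HopfAlgebra.antipode (R := C) x))) = star c * α.act x c := by
        intro x
        rw [hatc_apply, star_mul, α.act_star, star_star,
          star_antipode_star_antipode hH x]
      calc ∑ i, hatc α c (g1 i) * star (hatc α c (star (HopfAlgebra.antipode (R := C) (g2 i))))
          = ∑ i, α.act (g1 i) (star c) * α.act (g2 i) c := by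
            refine Finset.sum_congr rfl fun i _ => ?_
            rw [hterm, hatc_apply, mul_assoc, ← mul_assoc c (star c), hc.2.2, one_mul]
        _ = α.act g (star c * c) := by rw [← α.act_ab g (star c) c n g1 g2 hrep]
        _ = α.act g 1 := by rw [hc.2.1]
        _ = Coalgebra.counit (R := C) g • (1 : A) := α.act_unit g
  · intro c c' hc hc'
    have hcomm := hc.1
    have hsc' := hstarcomm c' hc'
    apply LinearMap.ext; intro g
    obtain ⟨n, g1, g2, hrep⟩ := exists_swRep (C := C) g
    rw [conv_apply' hrep]
    calc hatc α (c * c') g = α.act g (star c * star c') * (c * c') := by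
          rw [hatc_apply, star_mul, hsc' (star c)]
      _ = (∑ i, α.act (g1 i) (star c) * α.act (g2 i) (star c')) * (c * c') := by
          rw [α.act_ab g (star c) (star c') n g1 g2 hrep]
      _ = ∑ i, hatc α c (g1 i) * hatc α c' (g2 i) := by
          rw [Finset.sum_mul]
          refine Finset.sum_congr rfl fun i _ => ?_
          rw [hatc_apply, hatc_apply]
          calc (α.act (g1 i) (star c) * α.act (g2 i) (star c')) * (c * c')
              = α.act (g1 i) (star c) * (α.act (g2 i) (star c') * (c * c')) :=
                mul_assoc _ _ _
            _ = α.act (g1 i) (star c) * ((α.act (g2 i) (star c') * c) * c') := by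
                rw [← mul_assoc (α.act (g2 i) (star c')) c c']
            _ = α.act (g1 i) (star c) * ((c * α.act (g2 i) (star c')) * c') := by
                rw [hcomm (α.act (g2 i) (star c'))]
            _ = α.act (g1 i) (star c) * (c * (α.act (g2 i) (star c') * c')) := by
                rw [mul_assoc c (α.act (g2 i) (star c')) c']
            _ = (α.act (g1 i) (star c) * c) * (α.act (g2 i) (star c') * c') := by
                rw [← mul_assoc]
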